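/- For n ≥ 1 let ρ⁰_n be the (n+1)-qubit state ρ⁰_n = |0⟩⟨0| ⊗ₖ (2^{−n} I_{2^n}), viewed as a matrix indexed by bit strings Fin (n+1) → Fin 2 (it is diagonal, with entry 2^{−n} on strings whose first bit is 0 and entry 0 otherwise). Then for every nonempty proper subset S of the qubit index set Fin (n+1), under the natural identification of the index set with (S → Fin 2) × (Sᶜ → Fin 2): (a) ρ⁰_n is separable across the bipartition S versus Sᶜ; and (b) for every ε > 0 there exists a unitary matrix U with ‖U − I‖ < ε (ℓ²-operator norm) such that the partial transpose (on the S factor) of U ρ⁰_n U† is not positive semidefinite. That is, ρ⁰_n is boundary separable in its unitary orbit for all 2^{n+1} − 2 nontrivial bipartitions. -/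

import Mathlib

/-!
`ρ⁰` is diagonal with nonnegative entries, hence a sum of Kronecker products of diagonal
positive semidefinite matrices, so it is separable across every bipartition.

For the perturbation choose positions `a ∈ S`, `b ∉ S`, one of them the first qubit, and rotate by
a small angle `θ` in the plane spanned by the strings `x = 0⋯0` and `y = e_a + e_b`. Since `x` is in
the support of `ρ⁰` and `y` is not, this creates the coherence `cos θ sin θ 2⁻ⁿ` between `x` and
`y`, while the two hybrid strings (`y` on `S`, `x` off `S`) and (`x` on `S`, `y` off `S`) are left
untouched; one of them has first bit `1`, so its diagonal entry is `0`. The partial transpose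
moves the coherence to the entry between the two hybrids, and a positive semidefinite matrix with
a vanishing diagonal entry vanishes on that row and column.
-/

open Matrix Kronecker
open scoped ComplexOrder

/-- Partial transpose on the first factor of a bipartite matrix. -/
def PT {A B : Type*} (M : Matrix (A × B) (A × B) ℂ) : Matrix (A × B) (A × B) ℂ :=
  Matrix.of fun p q => M (q.1, p.2) (p.1, q.2)

/-- A bipartite matrix is separable if it is a finite sum of Kronecker products of
positive semidefinite matrices. -/
def Separable {A B : Type*} [Fintype A] [Fintype B]
    (ρ : Matrix (A × B) (A × B) ℂ) : Prop :=
  ∃ (k : ℕ) (M : Fin k → Matrix A A ℂ) (N : Fin k → Matrix B B ℂ),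
    (∀ l, (M l).PosSemidef) ∧ (∀ l, (N l).PosSemidef) ∧ ρ = ∑ l, M l ⊗ₖ N l

/-- The ℓ²-operator norm of a square complex matrix. -/
noncomputable def opNorm {d : Type*} [Fintype d] [DecidableEq d]
    (M : Matrix d d ℂ) : ℝ :=
  ‖Matrix.toEuclideanCLM (𝕜 := ℂ) M‖

/-- The `(n+1)`-qubit state `ρ⁰ₙ = |0⟩⟨0| ⊗ₖ 2⁻ⁿ I`, indexed by bit strings. -/
noncomputable def rho0 (n : ℕ) :
    Matrix (Fin (n + 1) → Fin 2) (Fin (n + 1) → Fin 2) ℂ :=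
  Matrix.of fun x y => if x = y ∧ x 0 = 0 then (1 / 2 ^ n : ℂ) else 0

/-- The natural identification of bit strings with pairs of bit strings on a subset `S`
of positions and its complement. -/
def splitEquiv {n : ℕ} (S : Finset (Fin n)) :
    (Fin n → Fin 2) ≃ ((S → Fin 2) × ((Sᶜ : Finset (Fin n)) → Fin 2)) :=
  ((Equiv.sumCompl (· ∈ S)).symm.arrowCongr (Equiv.refl (Fin 2))).trans
    ((Equiv.sumArrowEquivProdArrow _ _ (Fin 2)).trans
      (Equiv.prodCongr (Equiv.refl _)
        (((Equiv.subtypeEquivRight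
            (fun x => (Finset.mem_compl (s := S) (a := x)))).arrowCongr
          (Equiv.refl (Fin 2))).symm)))


open Filter Topology

section Givens

variable {d : Type*} [DecidableEq d]

noncomputable def givens (x y : d) (θ : ℝ) : Matrix d d ℂ :=
  1 + ((Real.cos θ - 1 : ℝ) : ℂ) • (single x x 1 + single y y 1)
    + (Real.sin θ : ℂ) • (single y x 1 - single x y 1)

theorem givens_mem_unitaryGroup [Fintype d] {x y : d} (hxy : x ≠ y) (θ : ℝ) :
    givens x y θ ∈ unitaryGroup d ℂ := by
  rw [mem_unitaryGroup_iff', star_eq_conjTranspose, givens]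
  have hyx := hxy.symm
  set P : Matrix d d ℂ := single x x 1 + single y y 1
  set J : Matrix d d ℂ := single y x 1 - single x y 1
  have hPP : P * P = P := by simp [P, add_mul, mul_add, single_mul_single_of_ne, hxy, hyx]
  have hPJ : P * J = J := by simp [P, J, add_mul, mul_sub, single_mul_single_of_ne, hxy, hyx]
  have hJP : J * P = J := by simp [P, J, sub_mul, mul_add, single_mul_single_of_ne, hxy, hyx]; abel
  have hJJ : J * J = -P := by simp [P, J, sub_mul, mul_sub, single_mul_single_of_ne, hxy, hyx]; abel
  have hPh : Pᴴ = P := by simp [P]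
  have hJh : Jᴴ = -J := by simp [J]
  -- by the relations above, `Gᴴ * G = 1 + ((cos θ - 1) ^ 2 + 2 * (cos θ - 1) + sin θ ^ 2) • P`
  have trig : ((Real.cos θ - 1 : ℝ) : ℂ) ^ 2 + 2 * ((Real.cos θ - 1 : ℝ) : ℂ)
      + (Real.sin θ : ℂ) ^ 2 = 0 := by
    push_cast
    linear_combination Complex.sin_sq_add_cos_sq (θ : ℂ)
  simp only [conjTranspose_add, conjTranspose_smul, conjTranspose_one, hPh, hJh, Complex.star_def,
    Complex.conj_ofReal]
  simp only [add_mul, mul_add, one_mul, mul_one, smul_mul_assoc, mul_smul_comm, hPP, hPJ, hJP, hJJ,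
    smul_neg, neg_mul]
  linear_combination (norm := module) trig • P

theorem givens_apply_of_ne_left {x y p : d} (hpx : p ≠ x) (hpy : p ≠ y) (θ : ℝ) (q : d) :
    givens x y θ p q = (1 : Matrix d d ℂ) p q := by
  simp [givens, hpx.symm, hpy.symm]

theorem givens_apply_of_ne_right {x y q : d} (hqx : q ≠ x) (hqy : q ≠ y) (θ : ℝ) (p : d) :
    givens x y θ p q = (1 : Matrix d d ℂ) p q := by
  simp [givens, hqx.symm, hqy.symm]

theorem givens_apply_left_left {x y : d} (hxy : x ≠ y) (θ : ℝ) :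
    givens x y θ x x = Real.cos θ := by
  simp [givens, hxy.symm]

theorem givens_apply_right_left {x y : d} (hxy : x ≠ y) (θ : ℝ) :
    givens x y θ y x = Real.sin θ := by
  simp [givens, hxy, hxy.symm]

theorem givens_apply_right_right {x y : d} (hxy : x ≠ y) (θ : ℝ) :
    givens x y θ y y = Real.cos θ := by
  simp [givens, hxy]

theorem givens_apply_left_right {x y : d} (hxy : x ≠ y) (θ : ℝ) :
    givens x y θ x y = -Real.sin θ := by
  simp [givens, hxy, hxy.symm]

theorem givens_zero (x y : d) : givens x y 0 = 1 := by simp [givens]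

theorem continuous_givens (x y : d) : Continuous (givens x y) := by
  unfold givens
  fun_prop

open scoped Matrix.Norms.L2Operator in
theorem tendsto_opNorm_givens_sub_one [Fintype d] (x y : d) :
    Tendsto (fun θ => opNorm (givens x y θ - 1)) (𝓝 0) (𝓝 0) := by
  have h := (continuous_givens x y).tendsto 0
  rw [givens_zero, tendsto_iff_dist_tendsto_zero] at h
  simp only [dist_eq_norm] at h
  exact h

theorem givens_mul_diagonal_mul_conjTranspose_apply_of_ne [Fintype d] {x y z : d}
    (hzx : z ≠ x) (hzy : z ≠ y) (θ : ℝ) (f : d → ℂ) :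
    (givens x y θ * diagonal f * (givens x y θ)ᴴ) z z = f z := by
  simp [mul_apply, givens_apply_of_ne_left hzx hzy, one_apply]

theorem givens_mul_diagonal_mul_conjTranspose_apply_left_right [Fintype d] {x y : d}
    (hxy : x ≠ y) (θ : ℝ) (f : d → ℂ) :
    (givens x y θ * diagonal f * (givens x y θ)ᴴ) x y =
      Real.cos θ * Real.sin θ * (f x - f y) := by
  rw [mul_apply, Fintype.sum_eq_add x y hxy fun s ⟨hsx, hsy⟩ => by
    simp [givens_apply_of_ne_right hsx hsy, one_apply, Ne.symm hsx]]
  simp [givens_apply_left_left hxy, givens_apply_right_left hxy, givens_apply_left_right hxy,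
    givens_apply_right_right hxy, -Complex.ofReal_cos, -Complex.ofReal_sin]
  ring

end Givens

section Entanglement

variable {𝕜 n : Type*} [RCLike 𝕜] [Fintype n]

theorem Matrix.PosSemidef.apply_eq_zero_of_diag_right {A : Matrix n n 𝕜} (hA : A.PosSemidef)
    {q : n} (hq : A q q = 0) (p : n) : A p q = 0 := by
  classical
  have : A *ᵥ Pi.single q 1 = 0 := (hA.dotProduct_mulVec_zero_iff _).mp (by simp [hq])
  simpa using congrFun this p

theorem Matrix.PosSemidef.apply_eq_zero_of_diag_left {A : Matrix n n 𝕜} (hA : A.PosSemidef)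
    {p : n} (hp : A p p = 0) (q : n) : A p q = 0 := by
  rw [← hA.isHermitian.apply, hA.apply_eq_zero_of_diag_right hp, star_zero]

/-- The partial transpose sends the coherence `M x y` to the entry between the two hybrids of `x`
and `y`. -/
theorem not_posSemidef_PT_reindex {D A B : Type*} [Fintype A] [Fintype B] (e : D ≃ A × B)
    {M : Matrix D D ℂ} {x y : D} (hxy : M x y ≠ 0)
    (hdiag : M (e.symm ((e y).1, (e x).2)) (e.symm ((e y).1, (e x).2)) = 0 ∨
      M (e.symm ((e x).1, (e y).2)) (e.symm ((e x).1, (e y).2)) = 0) :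
    ¬ (PT (reindex e e M)).PosSemidef := by
  intro hPT
  have hoff : PT (reindex e e M) ((e y).1, (e x).2) ((e x).1, (e y).2) = M x y := by
    simp [PT]
  refine hxy (hoff ▸ ?_)
  rcases hdiag with hz | hw
  · exact hPT.apply_eq_zero_of_diag_left (by simpa [PT] using hz) _
  · exact hPT.apply_eq_zero_of_diag_right (by simpa [PT] using hw) _

end Entanglement

section Separable

variable {A B : Type*} [Fintype A] [Fintype B]

theorem separable_sum_kronecker {ι : Type*} [Fintype ι] {M : ι → Matrix A A ℂ}
    {N : ι → Matrix B B ℂ} (hM : ∀ i, (M i).PosSemidef) (hN : ∀ i, (N i).PosSemidef) :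
    Separable (∑ i, M i ⊗ₖ N i) := by
  let e := (Fintype.equivFin ι).symm
  exact ⟨Fintype.card ι, M ∘ e, N ∘ e, fun l => hM _, fun l => hN _,
    (e.sum_comp fun i => M i ⊗ₖ N i).symm⟩

theorem separable_diagonal [DecidableEq A] [DecidableEq B] {f : A × B → ℂ} (hf : 0 ≤ f) :
    Separable (diagonal f) := by
  have : diagonal f = ∑ a, diagonal (Pi.single a 1) ⊗ₖ diagonal fun b => f (a, b) := by
    ext p q
    simp [diagonal_kronecker_diagonal, Matrix.sum_apply, diagonal_apply, Pi.single_apply]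
  rw [this]
  exact separable_sum_kronecker (fun a => .diagonal (Pi.single_nonneg.2 zero_le_one))
    fun a => .diagonal fun b => hf (a, b)

end Separable

theorem rho0_eq_diagonal (n : ℕ) :
    rho0 n = diagonal fun v => if v 0 = 0 then (1 / 2 ^ n : ℂ) else 0 := by
  ext v w
  by_cases h : v = w <;> simp [rho0, h]

theorem separable_reindex_rho0 (n : ℕ) (S : Finset (Fin (n + 1))) :
    Separable (reindex (splitEquiv S) (splitEquiv S) (rho0 n)) := by
  rw [rho0_eq_diagonal, reindex_apply, submatrix_diagonal_equiv]
  refine separable_diagonal fun p => ?_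
  dsimp only [Function.comp, Pi.zero_apply]
  split_ifs <;> positivity

theorem splitEquiv_symm_fst_snd {n : ℕ} (S : Finset (Fin n)) (u v : Fin n → Fin 2) :
    (splitEquiv S).symm ((splitEquiv S u).1, (splitEquiv S v).2) = S.piecewise u v := by
  ext k
  by_cases hk : k ∈ S <;> simp [splitEquiv, hk]

theorem not_posSemidef_PT_givens_rho0 {n : ℕ} {S : Finset (Fin (n + 1))} {a b : Fin (n + 1)}
    (ha : a ∈ S) (hb : b ∉ S) (h0 : a = 0 ∨ b = 0) {θ : ℝ} (hcos : Real.cos θ ≠ 0)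
    (hsin : Real.sin θ ≠ 0) :
    ¬ (PT (reindex (splitEquiv S) (splitEquiv S)
      (givens 0 (Pi.single a 1 + Pi.single b 1) θ * rho0 n *
        (givens 0 (Pi.single a 1 + Pi.single b 1) θ)ᴴ))).PosSemidef := by
  set y : Fin (n + 1) → Fin 2 := Pi.single a 1 + Pi.single b 1
  have hab : a ≠ b := fun h => hb (h ▸ ha)
  have hya : y a = 1 := by simp [y, hab]
  have hyb : y b = 1 := by simp [y, hab.symm]
  have hy0 : y 0 = 1 := by rcases h0 with rfl | rfl <;> assumption
  have hxy : 0 ≠ y := fun h => by simpa [hya] using congrFun h a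
  rw [rho0_eq_diagonal]
  refine not_posSemidef_PT_reindex (x := 0) (y := y) _ ?_ ?_
  · rw [givens_mul_diagonal_mul_conjTranspose_apply_left_right hxy]
    simp [hy0, hcos, hsin, -Complex.ofReal_cos, -Complex.ofReal_sin]
  · rw [splitEquiv_symm_fst_snd, splitEquiv_symm_fst_snd]
    rcases h0 with rfl | rfl
    · left
      rw [givens_mul_diagonal_mul_conjTranspose_apply_of_ne
        (fun h => by simpa [ha, hy0] using congrFun h 0)
        (fun h => by simpa [hb, hyb] using congrFun h b)]
      simp [ha, hy0]
    · right
      rw [givens_mul_diagonal_mul_conjTranspose_apply_of_ne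
        (fun h => by simpa [hb, hy0] using congrFun h 0)
        (fun h => by simpa [ha, hya] using congrFun h a)]
      simp [hb, hy0]

theorem exists_mem_notMem_eq_zero {n : ℕ} {S : Finset (Fin (n + 1))} (hS : S.Nonempty)
    (hS' : S ≠ Finset.univ) : ∃ a b, a ∈ S ∧ b ∉ S ∧ (a = 0 ∨ b = 0) := by
  by_cases h0 : 0 ∈ S
  · obtain ⟨b, hb⟩ : ∃ b, b ∉ S := by
      by_contra! h
      exact hS' (Finset.eq_univ_of_forall h)
    exact ⟨0, b, h0, hb, .inl rfl⟩
  · obtain ⟨a, ha⟩ := hS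
    exact ⟨a, 0, ha, h0, .inr rfl⟩

theorem exists_unitary_near_one_not_posSemidef_PT_rho0 {n : ℕ} {S : Finset (Fin (n + 1))}
    {a b : Fin (n + 1)} (ha : a ∈ S) (hb : b ∉ S) (h0 : a = 0 ∨ b = 0) {ε : ℝ} (hε : 0 < ε) :
    ∃ U ∈ unitaryGroup (Fin (n + 1) → Fin 2) ℂ, opNorm (U - 1) < ε ∧
      ¬ (PT (reindex (splitEquiv S) (splitEquiv S) (U * rho0 n * Uᴴ))).PosSemidef := by
  set y : Fin (n + 1) → Fin 2 := Pi.single a 1 + Pi.single b 1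
  have hab : a ≠ b := fun h => hb (h ▸ ha)
  have hxy : 0 ≠ y := fun h => by simpa [y, hab] using congrFun h a
  have hnear : ∀ᶠ θ in 𝓝 0, opNorm (givens 0 y θ - 1) < ε :=
    (tendsto_opNorm_givens_sub_one 0 y).eventually (gt_mem_nhds hε)
  obtain ⟨θ, hU, hθ0, hθ1⟩ :=
    ((eventually_nhdsWithin_of_eventually_nhds hnear).and (Ioo_mem_nhdsGT one_pos)).exists
  have hsin : 0 < Real.sin θ := Real.sin_pos_of_pos_of_lt_pi hθ0 (by linarith [Real.pi_gt_three])
  have hcos : 0 < Real.cos θ := Real.cos_pos_of_mem_Ioo ⟨by linarith [Real.pi_gt_three],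
    by linarith [Real.pi_gt_three]⟩
  exact ⟨_, givens_mem_unitaryGroup hxy θ, hU,
    not_posSemidef_PT_givens_rho0 ha hb h0 hcos.ne' hsin.ne'⟩

theorem stmt2_general (n : ℕ) (S : Finset (Fin (n + 1)))
    (hS : S.Nonempty) (hS' : S ≠ Finset.univ) :
    Separable (Matrix.reindex (splitEquiv S) (splitEquiv S) (rho0 n)) ∧
    ∀ ε > (0 : ℝ), ∃ U : Matrix (Fin (n + 1) → Fin 2) (Fin (n + 1) → Fin 2) ℂ,
      U ∈ Matrix.unitaryGroup (Fin (n + 1) → Fin 2) ℂ ∧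
      opNorm (U - 1) < ε ∧
      ¬ (PT (Matrix.reindex (splitEquiv S) (splitEquiv S) (U * rho0 n * Uᴴ))).PosSemidef := by
  refine ⟨separable_reindex_rho0 n S, fun ε hε => ?_⟩
  obtain ⟨a, b, ha, hb, h0⟩ := exists_mem_notMem_eq_zero hS hS'
  exact exists_unitary_near_one_not_posSemidef_PT_rho0 ha hb h0 hε

/-- for every nonempty proper subset `S` of qubit positions, `ρ⁰ₙ` is
separable across the bipartition `S` vs `Sᶜ`, and for every `ε > 0` there is a unitary
`U` with `‖U − I‖ < ε` such that the partial transpose (on the `S` factor) of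
`U ρ⁰ₙ U†` is not positive semidefinite. -/
theorem stmt2 (n : ℕ) (hn : 1 ≤ n) (S : Finset (Fin (n + 1)))
    (hS : S.Nonempty) (hS' : S ≠ Finset.univ) :
    Separable (Matrix.reindex (splitEquiv S) (splitEquiv S) (rho0 n)) ∧
    ∀ ε > (0 : ℝ), ∃ U : Matrix (Fin (n + 1) → Fin 2) (Fin (n + 1) → Fin 2) ℂ,
      U ∈ Matrix.unitaryGroup (Fin (n + 1) → Fin 2) ℂ ∧
      opNorm (U - 1) < ε ∧
      ¬ (PT (Matrix.reindex (splitEquiv S) (splitEquiv S) (U * rho0 n * Uᴴ))).PosSemidef :=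
  stmt2_general n S hS hS'
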